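/- If T: E → F is order almost Dunford-Pettis and S: F → G is almost interval preserving, then the composition S∘T is order almost Dunford-Pettis. -/

import Mathlib

open Filter Topology Pointwise

variable {E F G X : Type*}

section Defs

variable [NormedAddCommGroup E] [Lattice E] [HasSolidNorm E] [IsOrderedAddMonoid E] [NormedSpace ℝ E]

/-- `|f|` of a functional evaluated at `x ≥ 0`: `sup {f y : |y| ≤ x}`. -/
noncomputable def absEval (f : E →L[ℝ] ℝ) (x : E) : ℝ :=
  ⨆ y : {y : E // |y| ≤ x}, f y.1

/-- `|f| ⊓ |g| = 0` in the dual lattice, via the Riesz-Kantorovich formula. -/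
def DisjointPair (f g : E →L[ℝ] ℝ) : Prop :=
  ∀ x : E, 0 ≤ x →
    (⨅ y : {y : E // 0 ≤ y ∧ y ≤ x}, (absEval f y.1 + absEval g (x - y.1))) = 0

/-- A pairwise disjoint sequence of functionals. -/
def DisjointSeqDual (f : ℕ → E →L[ℝ] ℝ) : Prop :=
  ∀ n m, n ≠ m → DisjointPair (f n) (f m)

/-- A weakly null sequence in a normed space. -/
def WeaklyNullSeq {Y : Type*} [NormedAddCommGroup Y] [NormedSpace ℝ Y] (y : ℕ → Y) : Prop :=
  ∀ φ : Y →L[ℝ] ℝ, Tendsto (fun n => φ (y n)) atTop (𝓝 0)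

/-- An almost Dunford-Pettis set: disjoint weakly null sequences in the dual converge
uniformly to zero on it. -/
def AlmostDPSet (A : Set E) : Prop :=
  ∀ f : ℕ → E →L[ℝ] ℝ, DisjointSeqDual f → WeaklyNullSeq f →
    Tendsto (fun n => ⨆ a : A, |f n a.1|) atTop (𝓝 0)

end Defs

variable [NormedAddCommGroup E] [Lattice E] [HasSolidNorm E] [IsOrderedAddMonoid E] [NormedSpace ℝ E]
  [NormedAddCommGroup F] [Lattice F] [HasSolidNorm F] [IsOrderedAddMonoid F] [NormedSpace ℝ F] in
/-- An order almost Dunford-Pettis operator: the image of each order interval `[-x, x]`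
is an almost Dunford-Pettis set. -/
def OrderAlmostDP (T : E →L[ℝ] F) : Prop :=
  ∀ x : E, 0 ≤ x → AlmostDPSet (T '' Set.Icc (-x) x)

variable [NormedAddCommGroup E] [Lattice E] [HasSolidNorm E] [IsOrderedAddMonoid E] [NormedSpace ℝ E]
  [NormedAddCommGroup F] [Lattice F] [HasSolidNorm F] [IsOrderedAddMonoid F] [NormedSpace ℝ F] in
/-- An almost interval preserving operator: positive, with `T[0,x]` dense in `[0,Tx]`. -/
def AlmostIntervalPreserving (T : E →L[ℝ] F) : Prop :=
  (∀ x : E, 0 ≤ x → 0 ≤ T x) ∧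
    ∀ x : E, 0 ≤ x → Set.Icc (0 : F) (T x) ⊆ closure (T '' Set.Icc 0 x)

/-!
Since `(S ∘ T)[-x, x] = S(T[-x, x])`, it suffices that `S` maps almost Dunford-Pettis sets to almost
Dunford-Pettis sets. For disjoint weakly null `f n` on `G`, the functionals `f n ∘ S` are weakly null
(precomposition with `S` is bounded between the duals) and `sup_{S(A)} |f n| = sup_A |f n ∘ S|`, so
what has to be shown is that precomposition keeps `f, g` disjoint. As `S` is positive,
`|f ∘ S|(y) ≤ |f|(S y)`. The Riesz-Kantorovich infimum for `f, g` at `S x` is almost attained at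
some `z ∈ [0, S x]`, which by density is close to some `S y` with `y ∈ [0, x]`; since `|f|` moves by
at most `‖f‖ ‖a - b‖` between positive `a, b`, the infimum for `f ∘ S, g ∘ S` at `x` is `0` too.
-/

lemma abs_sub_truncate_le {α : Type*} [Lattice α] [AddCommGroup α] [IsOrderedAddMonoid α]
    (y b : α) : |y - (y ⊓ b) ⊔ -b| ≤ (|y| - b) ⊔ 0 := by
  rw [abs_le', neg_sub]
  constructor
  · calc y - (y ⊓ b) ⊔ -b ≤ y - y ⊓ b := sub_le_sub_left le_sup_left y
      _ = (y - y) ⊔ (y - b) := sub_inf y b y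
      _ ≤ (|y| - b) ⊔ 0 := by
        rw [sub_self, sup_comm]
        exact sup_le_sup_right (sub_le_sub_right (le_abs_self y) b) 0
  · calc (y ⊓ b) ⊔ -b - y = (y ⊓ b - y) ⊔ (-b - y) := sup_sub _ _ _
      _ ≤ (|y| - b) ⊔ 0 := by
        refine sup_le (le_sup_of_le_right (sub_nonpos.2 inf_le_left)) (le_sup_of_le_left ?_)
        rw [sub_eq_add_neg, add_comm, ← sub_eq_add_neg]
        exact sub_le_sub_right (neg_le_abs y) b

lemma abs_truncate_le {α : Type*} [Lattice α] [AddCommGroup α] [IsOrderedAddMonoid α]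
    {b : α} (hb : 0 ≤ b) (y : α) : |(y ⊓ b) ⊔ -b| ≤ b :=
  abs_le'.2 ⟨sup_le inf_le_right (neg_le_self hb), neg_le.1 le_sup_right⟩

lemma iSup_image_subtype {α β γ : Type*} [SupSet γ] (g : β → γ) (S : α → β) (A : Set α) :
    ⨆ b : ↥(S '' A), g b = ⨆ a : A, g (S a) :=
  (Set.imageFactorization_surjective.iSup_comp (g ∘ Subtype.val)).symm

lemma iInf_eq_zero_iff_forall_exists_lt {ι : Sort*} [Nonempty ι] {φ : ι → ℝ}
    (hφ : ∀ i, 0 ≤ φ i) : ⨅ i, φ i = 0 ↔ ∀ ε > 0, ∃ i, φ i < ε := by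
  refine ⟨fun h ε hε => exists_lt_of_ciInf_lt (h ▸ hε), fun h => le_antisymm ?_ (le_ciInf hφ)⟩
  refine le_of_forall_pos_le_add fun ε hε => ?_
  obtain ⟨i, hi⟩ := h ε hε
  exact (ciInf_le ⟨0, Set.forall_mem_range.2 hφ⟩ i).trans (by linarith)

lemma WeaklyNullSeq.map {Y Z : Type*} [NormedAddCommGroup Y] [NormedSpace ℝ Y]
    [NormedAddCommGroup Z] [NormedSpace ℝ Z] {y : ℕ → Y} (h : WeaklyNullSeq y) (L : Y →L[ℝ] Z) :
    WeaklyNullSeq fun n => L (y n) :=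
  fun φ => h (φ.comp L)

section Dual

variable [NormedAddCommGroup E] [Lattice E] [NormedSpace ℝ E]

lemma ContinuousLinearMap.apply_le_opNorm_mul_of_abs_le [HasSolidNorm E] (f : E →L[ℝ] ℝ)
    {x y : E} (h : |y| ≤ |x|) : f y ≤ ‖f‖ * ‖x‖ :=
  (le_abs_self _).trans <| (f.le_opNorm y).trans <|
    mul_le_mul_of_nonneg_left (norm_le_norm_of_abs_le_abs h) (norm_nonneg f)

variable [IsOrderedAddMonoid E]

lemma absEval_bddAbove [HasSolidNorm E] (f : E →L[ℝ] ℝ) {x : E} (hx : 0 ≤ x) :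
    BddAbove (Set.range fun y : {y : E // |y| ≤ x} => f y.1) :=
  ⟨‖f‖ * ‖x‖, by
    rintro _ ⟨⟨y, hy⟩, rfl⟩
    exact f.apply_le_opNorm_mul_of_abs_le (by rwa [abs_of_nonneg hx])⟩

lemma le_absEval [HasSolidNorm E] (f : E →L[ℝ] ℝ) {x y : E} (hx : 0 ≤ x) (hy : |y| ≤ x) :
    f y ≤ absEval f x :=
  le_ciSup (absEval_bddAbove f hx) ⟨y, hy⟩

lemma absEval_nonneg [HasSolidNorm E] (f : E →L[ℝ] ℝ) {x : E} (hx : 0 ≤ x) :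
    0 ≤ absEval f x := by
  simpa using le_absEval f hx (y := 0) (by simpa using hx)

lemma absEval_le (f : E →L[ℝ] ℝ) {x : E} (hx : 0 ≤ x) {c : ℝ} (h : ∀ y, |y| ≤ x → f y ≤ c) :
    absEval f x ≤ c :=
  haveI : Nonempty {y : E // |y| ≤ x} := ⟨⟨0, by simpa using hx⟩⟩
  ciSup_le fun y => h y.1 y.2

-- Split `y` with `|y| ≤ a` into its truncation to `[-b, b]` and a remainder bounded by `(a - b)⁺`.
lemma absEval_le_absEval_add [HasSolidNorm E] (f : E →L[ℝ] ℝ) {a b : E} (ha : 0 ≤ a)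
    (hb : 0 ≤ b) : absEval f a ≤ absEval f b + ‖f‖ * ‖a - b‖ := by
  refine absEval_le f ha fun y hy => ?_
  set w := (y ⊓ b) ⊔ -b
  have hrest : |y - w| ≤ |a - b| :=
    calc |y - w| ≤ (|y| - b) ⊔ 0 := abs_sub_truncate_le y b
      _ ≤ (a - b) ⊔ 0 := sup_le_sup_right (sub_le_sub_right hy b) 0
      _ ≤ |a - b| := sup_le (le_abs_self _) (abs_nonneg _)
  calc f y = f w + f (y - w) := by rw [← map_add, add_sub_cancel]
    _ ≤ absEval f b + ‖f‖ * ‖a - b‖ :=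
      add_le_add (le_absEval f hb (abs_truncate_le hb y))
        (f.apply_le_opNorm_mul_of_abs_le hrest)

end Dual

section AlmostIntervalPreserving

variable [NormedAddCommGroup F] [Lattice F] [IsOrderedAddMonoid F] [NormedSpace ℝ F]
  [NormedAddCommGroup G] [Lattice G] [IsOrderedAddMonoid G] [NormedSpace ℝ G]

lemma abs_apply_le_apply_abs {S : F →L[ℝ] G} (hS : ∀ x : F, 0 ≤ x → 0 ≤ S x) (u : F) :
    |S u| ≤ S |u| := by
  have hmono : Monotone S := fun a b hab => by
    simpa [sub_nonneg] using hS (b - a) (sub_nonneg.2 hab)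
  exact abs_le'.2 ⟨hmono (le_abs_self u), by simpa using hmono (neg_le_abs u)⟩

variable [HasSolidNorm G] {S : F →L[ℝ] G}

lemma absEval_comp_le (hS : ∀ x : F, 0 ≤ x → 0 ≤ S x) (f : G →L[ℝ] ℝ) {y : F} (hy : 0 ≤ y) :
    absEval (f.comp S) y ≤ absEval f (S y) :=
  absEval_le _ hy fun u hu => le_absEval f (hS y hy) <|
    (abs_apply_le_apply_abs hS u).trans (by simpa using hS _ (sub_nonneg.2 hu))

lemma absEval_comp_add_absEval_comp_le (hS : ∀ x : F, 0 ≤ x → 0 ≤ S x) (f g : G →L[ℝ] ℝ)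
    {x y : F} (hy : 0 ≤ y) (hyx : y ≤ x) {z : G} (hz : 0 ≤ z) (hzx : z ≤ S x) :
    absEval (f.comp S) y + absEval (g.comp S) (x - y) ≤
      absEval f z + absEval g (S x - z) + (‖f‖ + ‖g‖) * ‖S y - z‖ := by
  have hf := (absEval_comp_le hS f hy).trans (absEval_le_absEval_add f (hS y hy) hz)
  have hg := (absEval_comp_le hS g (sub_nonneg.2 hyx)).trans
    (absEval_le_absEval_add g (hS _ (sub_nonneg.2 hyx)) (sub_nonneg.2 hzx))
  rw [show S (x - y) - (S x - z) = -(S y - z) by rw [map_sub]; abel, norm_neg] at hg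
  linarith

variable [HasSolidNorm F]

lemma DisjointPair.comp {f g : G →L[ℝ] ℝ} (h : DisjointPair f g)
    (hS : AlmostIntervalPreserving S) : DisjointPair (f.comp S) (g.comp S) := by
  intro x hx
  have : Nonempty {y : F // 0 ≤ y ∧ y ≤ x} := ⟨⟨0, le_rfl, hx⟩⟩
  have : Nonempty {z : G // 0 ≤ z ∧ z ≤ S x} := ⟨⟨0, le_rfl, hS.1 x hx⟩⟩
  rw [iInf_eq_zero_iff_forall_exists_lt fun y => add_nonneg (absEval_nonneg _ y.2.1)
    (absEval_nonneg _ (sub_nonneg.2 y.2.2))]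
  intro ε hε
  obtain ⟨⟨z, hz, hzx⟩, hfg⟩ := (iInf_eq_zero_iff_forall_exists_lt fun z => add_nonneg
    (absEval_nonneg _ z.2.1) (absEval_nonneg _ (sub_nonneg.2 z.2.2))).1
    (h (S x) (hS.1 x hx)) (ε / 2) (half_pos hε)
  have hnear : ∀ᶠ w in 𝓝 z, (‖f‖ + ‖g‖) * ‖w - z‖ < ε / 2 := by
    have : Tendsto (fun w => (‖f‖ + ‖g‖) * ‖w - z‖) (𝓝 z) (𝓝 0) := by
      simpa using (tendsto_norm_sub_self z).const_mul (‖f‖ + ‖g‖)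
    exact this.eventually (gt_mem_nhds (half_pos hε))
  obtain ⟨_, ⟨y, ⟨hy, hyx⟩, rfl⟩, hSy⟩ :=
    ((mem_closure_iff_frequently.1 (hS.2 x hx ⟨hz, hzx⟩)).and_eventually hnear).exists
  exact ⟨⟨y, hy, hyx⟩, by
    linarith [absEval_comp_add_absEval_comp_le hS.1 f g hy hyx hz hzx]⟩

lemma AlmostDPSet.image {A : Set F} (hA : AlmostDPSet A)
    (hS : AlmostIntervalPreserving S) : AlmostDPSet (S '' A) := by
  intro f hdisj hnull
  refine (hA (fun n => (f n).comp S) (fun n m hnm => (hdisj n m hnm).comp hS)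
    (hnull.map ((ContinuousLinearMap.compL ℝ F G ℝ).flip S))).congr fun n => ?_
  exact (iSup_image_subtype (fun b => |f n b|) S A).symm

end AlmostIntervalPreserving

theorem comp_almostIntervalPreserving_orderAlmostDP_general [NormedAddCommGroup E] [Lattice E] [NormedSpace ℝ E] [NormedAddCommGroup F] [Lattice F] [HasSolidNorm F] [IsOrderedAddMonoid F] [NormedSpace ℝ F] [NormedAddCommGroup G] [Lattice G] [HasSolidNorm G] [IsOrderedAddMonoid G] [NormedSpace ℝ G]
    (T : E →L[ℝ] F) (hT : OrderAlmostDP T)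
    (S : F →L[ℝ] G) (hS : AlmostIntervalPreserving S) :
    OrderAlmostDP (S.comp T) := by
  intro x hx
  rw [ContinuousLinearMap.coe_comp, Set.image_comp]
  exact (hT x hx).image hS

/-- The composition of an order almost Dunford-Pettis operator with an almost interval
preserving operator is order almost Dunford-Pettis. -/
theorem comp_almostIntervalPreserving_orderAlmostDP [NormedAddCommGroup E] [Lattice E] [HasSolidNorm E] [IsOrderedAddMonoid E] [NormedSpace ℝ E] [PosSMulStrictMono ℝ E] [CompleteSpace E] [NormedAddCommGroup F] [Lattice F] [HasSolidNorm F] [IsOrderedAddMonoid F] [NormedSpace ℝ F] [PosSMulStrictMono ℝ F] [CompleteSpace F] [NormedAddCommGroup G] [Lattice G] [HasSolidNorm G] [IsOrderedAddMonoid G] [NormedSpace ℝ G] [PosSMulStrictMono ℝ G] [CompleteSpace G]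
    (T : E →L[ℝ] F) (hT : OrderAlmostDP T)
    (S : F →L[ℝ] G) (hS : AlmostIntervalPreserving S) :
    OrderAlmostDP (S.comp T) :=
  comp_almostIntervalPreserving_orderAlmostDP_general T hT S hS
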